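/- Let b₀,b₁,c₁,b₂,c₂ ∈ ℝ and let K:(0,∞)×(0,∞)→ℂ be measurable with |K(x,y)| ≤ C₀·x^{b₁}y^{c₁} for xy≤1 and |K(x,y)| ≤ C₀·x^{b₂}y^{c₂} for xy>1, for some C₀>0. (i) If b₀+b₁>0 and b₀+b₂≠−1, then G(x,y):=∫₀^x t^{b₀}K(t,y) dt is well defined and satisfies, for a constant C>0 independent of x,y: |G(x,y)| ≤ C·y^{c₁}x^{b₀+b₁+1} if xy≤1, and |G(x,y)| ≤ C·(y^{c₂}x^{b₀+b₂+1} + y^{c₁−b₀−b₁−1} + y^{c₂−b₀−b₂−1}) if xy>1. (ii) If b₀+b₂<−1 and b₀+b₁≠−1, then G(x,y):=∫_x^∞ t^{b₀}K(t,y) dt is well defined and satisfies, for a constant C>0 independent of x,y: |G(x,y)| ≤ C·(y^{c₁}x^{b₀+b₁+1} + y^{c₁−b₀−b₁−1} + y^{c₂−b₀−b₂−1}) if xy≤1, and |G(x,y)| ≤ C·y^{c₂}x^{b₀+b₂+1} if xy>1. -/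

import Mathlib

open MeasureTheory Set
open scoped ENNReal

/-- If `f` is a.e. strongly measurable on `s` and dominated by integrable `g` on `s`,
then `f` is integrable on `s` and the norm of its integral is at most `∫ g`. -/
lemma aux_norm_le {s : Set ℝ} (hs : MeasurableSet s) (f : ℝ → ℂ) (g : ℝ → ℝ)
    (hf : AEStronglyMeasurable f (volume.restrict s))
    (hg : IntegrableOn g s) (hbd : ∀ t ∈ s, ‖f t‖ ≤ g t) :
    IntegrableOn f s ∧ ‖∫ t in s, f t‖ ≤ ∫ t in s, g t := by
  have hae : ∀ᵐ t ∂(volume.restrict s), ‖f t‖ ≤ g t := ae_restrict_of_forall_mem hs hbd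
  have hfi : IntegrableOn f s := hg.mono' hf hae
  exact ⟨hfi, (norm_integral_le_integral_norm f).trans (integral_mono_ae hfi.norm hg hae)⟩

lemma intOn_Ioc_rpow_zero {p b : ℝ} (hp : -1 < p) (hb : 0 ≤ b) :
    IntegrableOn (fun t : ℝ => t ^ p) (Ioc 0 b) := by
  have := intervalIntegral.intervalIntegrable_rpow' (a := 0) (b := b) hp
  rwa [intervalIntegrable_iff_integrableOn_Ioc_of_le hb] at this

lemma int_Ioc_rpow_zero {p b : ℝ} (hp : -1 < p) (hb : 0 ≤ b) :
    ∫ t in Ioc 0 b, t ^ p = b ^ (p + 1) / (p + 1) := by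
  rw [← intervalIntegral.integral_of_le hb, integral_rpow (Or.inl hp),
    Real.zero_rpow (by linarith), sub_zero]

lemma intOn_Ioc_rpow_pos {p a b : ℝ} (ha : 0 < a) :
    IntegrableOn (fun t : ℝ => t ^ p) (Ioc a b) := by
  refine (ContinuousOn.integrableOn_Icc ?_).mono_set Ioc_subset_Icc_self
  intro t ht
  exact (Real.continuousAt_rpow_const t p (Or.inl (lt_of_lt_of_le ha ht.1).ne')).continuousWithinAt

lemma int_Ioc_rpow_pos {p a b : ℝ} (ha : 0 < a) (hab : a ≤ b) (hp : p ≠ -1) :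
    ∫ t in Ioc a b, t ^ p = (b ^ (p + 1) - a ^ (p + 1)) / (p + 1) := by
  rw [← intervalIntegral.integral_of_le hab]
  refine integral_rpow (Or.inr ⟨hp, ?_⟩)
  rw [uIcc_of_le hab]
  intro h
  exact absurd h.1 (by linarith)

lemma rpow_div_eq {y : ℝ} (hy : 0 < y) (c q : ℝ) :
    y ^ c * (1 / y) ^ q = y ^ (c - q) := by
  rw [one_div, Real.inv_rpow hy.le, ← Real.rpow_neg hy.le, ← Real.rpow_add hy, sub_eq_add_neg]

/-- Key single-piece estimate. -/
lemma piece (b₀ : ℝ) (K : ℝ → ℝ → ℂ) (hK : Measurable (Function.uncurry K))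
    {y M b c : ℝ} (hy : 0 < y) (hM : 0 ≤ M) {s : Set ℝ} (hs : MeasurableSet s)
    (hsub : ∀ t ∈ s, 0 < t) (hbd : ∀ t ∈ s, ‖K t y‖ ≤ M * t ^ b * y ^ c)
    (hint : IntegrableOn (fun t : ℝ => t ^ (b₀ + b)) s) :
    IntegrableOn (fun t : ℝ => (↑(t ^ b₀) : ℂ) * K t y) s ∧
    ‖∫ t in s, (↑(t ^ b₀) : ℂ) * K t y‖ ≤ M * y ^ c * ∫ t in s, t ^ (b₀ + b) := by
  have h1 : AEStronglyMeasurable (fun t : ℝ => (↑(t ^ b₀) : ℂ)) (volume.restrict s) := by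
    refine (Complex.continuous_ofReal.comp_continuousOn ?_).aestronglyMeasurable hs
    exact fun t ht =>
      (Real.continuousAt_rpow_const t b₀ (Or.inl (hsub t ht).ne')).continuousWithinAt
  have h2 : AEStronglyMeasurable (fun t : ℝ => K t y) (volume.restrict s) :=
    (hK.comp (measurable_id.prodMk measurable_const)).aestronglyMeasurable
  have hgint : IntegrableOn (fun t : ℝ => M * y ^ c * t ^ (b₀ + b)) s := hint.const_mul _
  have hptw : ∀ t ∈ s, ‖(↑(t ^ b₀) : ℂ) * K t y‖ ≤ M * y ^ c * t ^ (b₀ + b) := by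
    intro t ht
    have ht0 := hsub t ht
    rw [norm_mul, Complex.norm_real, Real.norm_of_nonneg (Real.rpow_nonneg ht0.le b₀),
      Real.rpow_add ht0]
    calc t ^ b₀ * ‖K t y‖ ≤ t ^ b₀ * (M * t ^ b * y ^ c) :=
          mul_le_mul_of_nonneg_left (hbd t ht) (Real.rpow_nonneg ht0.le b₀)
      _ = M * y ^ c * (t ^ b₀ * t ^ b) := by ring
  obtain ⟨hfi, hle⟩ := aux_norm_le hs _ _ (h1.mul h2) hgint hptw
  refine ⟨hfi, hle.trans_eq ?_⟩
  rw [integral_const_mul]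

/-- Proposition `PROPgmgeneral`: upper estimates for antiderivatives
`G(x,y) = ∫₀^x t^{b₀} K(t,y) dt` (case (i)) and `G(x,y) = ∫_x^∞ t^{b₀} K(t,y) dt`
(case (ii)) of kernels satisfying power-type upper bounds. -/
theorem stmt_15
    (b₀ b₁ c₁ b₂ c₂ C₀ : ℝ) (hC₀ : 0 < C₀)
    (K : ℝ → ℝ → ℂ) (hK : Measurable (Function.uncurry K))
    (hK1 : ∀ x > (0:ℝ), ∀ y > (0:ℝ), x * y ≤ 1 → ‖K x y‖ ≤ C₀ * x ^ b₁ * y ^ c₁)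
    (hK2 : ∀ x > (0:ℝ), ∀ y > (0:ℝ), 1 < x * y → ‖K x y‖ ≤ C₀ * x ^ b₂ * y ^ c₂) :
    ((0 < b₀ + b₁ ∧ b₀ + b₂ ≠ -1) →
      ∃ C > (0:ℝ), ∀ x > (0:ℝ), ∀ y > (0:ℝ),
        IntegrableOn (fun t : ℝ => (↑(t ^ b₀) : ℂ) * K t y) (Ioo 0 x) ∧
        (x * y ≤ 1 →
          ‖∫ t in Ioo (0:ℝ) x, (↑(t ^ b₀) : ℂ) * K t y‖ ≤ C * y ^ c₁ * x ^ (b₀ + b₁ + 1)) ∧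
        (1 < x * y →
          ‖∫ t in Ioo (0:ℝ) x, (↑(t ^ b₀) : ℂ) * K t y‖ ≤
            C * (y ^ c₂ * x ^ (b₀ + b₂ + 1) + y ^ (c₁ - b₀ - b₁ - 1) +
              y ^ (c₂ - b₀ - b₂ - 1))))
    ∧
    ((b₀ + b₂ < -1 ∧ b₀ + b₁ ≠ -1) →
      ∃ C > (0:ℝ), ∀ x > (0:ℝ), ∀ y > (0:ℝ),
        IntegrableOn (fun t : ℝ => (↑(t ^ b₀) : ℂ) * K t y) (Ioi x) ∧
        (x * y ≤ 1 →
          ‖∫ t in Ioi x, (↑(t ^ b₀) : ℂ) * K t y‖ ≤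
            C * (y ^ c₁ * x ^ (b₀ + b₁ + 1) + y ^ (c₁ - b₀ - b₁ - 1) +
              y ^ (c₂ - b₀ - b₂ - 1))) ∧
        (1 < x * y →
          ‖∫ t in Ioi x, (↑(t ^ b₀) : ℂ) * K t y‖ ≤ C * y ^ c₂ * x ^ (b₀ + b₂ + 1))) := by
  constructor
  · -- Case (i)
    rintro ⟨hA, hB⟩
    have hA1 : 0 < b₀ + b₁ + 1 := by linarith
    have hB1 : b₀ + b₂ + 1 ≠ 0 := fun h => hB (by linarith)
    have habs : 0 < |b₀ + b₂ + 1| := abs_pos.mpr hB1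
    obtain ⟨C, hCdef⟩ : ∃ C : ℝ, C = C₀ / (b₀ + b₁ + 1) + 2 * (C₀ / |b₀ + b₂ + 1|) + 1 :=
      ⟨_, rfl⟩
    have hC : 0 < C := by rw [hCdef]; positivity
    have hC1 : C₀ / (b₀ + b₁ + 1) ≤ C := by
      rw [hCdef]
      have : 0 ≤ 2 * (C₀ / |b₀ + b₂ + 1|) := by positivity
      linarith
    have hC2 : C₀ / |b₀ + b₂ + 1| ≤ C := by
      rw [hCdef]
      have h1 : 0 ≤ C₀ / (b₀ + b₁ + 1) := by positivity
      have h2 : 0 ≤ C₀ / |b₀ + b₂ + 1| := by positivity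
      linarith
    refine ⟨C, hC, ?_⟩
    intro x hx y hy
    have hy1 : (0:ℝ) < 1 / y := by positivity
    obtain ⟨m, hmdef⟩ : ∃ m : ℝ, m = min x (1 / y) := ⟨_, rfl⟩
    have hm0 : 0 < m := by rw [hmdef]; exact lt_min hx hy1
    have hmx : m ≤ x := by rw [hmdef]; exact min_le_left _ _
    have hmy : m ≤ 1 / y := by rw [hmdef]; exact min_le_right _ _
    -- piece 1 : on Ioc 0 m
    obtain ⟨I1, E1⟩ := piece b₀ K hK hy hC₀.le measurableSet_Ioc
      (fun t ht => ht.1)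
      (fun t ht => hK1 t ht.1 y hy ((le_div_iff₀ hy).mp (ht.2.trans hmy)))
      (intOn_Ioc_rpow_zero (by linarith) hm0.le)
    -- piece 2 : on Ioc m x
    obtain ⟨I2, E2⟩ := piece (b := b₂) (c := c₂) (s := Ioc m x) b₀ K hK hy hC₀.le measurableSet_Ioc
      (fun t ht => hm0.trans ht.1)
      (fun t ht => by
        refine hK2 t (hm0.trans ht.1) y hy ?_
        rcases le_or_gt x (1 / y) with h | h
        · exfalso
          have hmx2 : m = x := by rw [hmdef]; exact min_eq_left h
          have := ht.1; have := ht.2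
          linarith
        · have hmeq : m = 1 / y := by rw [hmdef]; exact min_eq_right h.le
          exact (div_lt_iff₀ hy).mp (hmeq ▸ ht.1))
      (intOn_Ioc_rpow_pos hm0)
    have hunion : Ioc (0:ℝ) m ∪ Ioc m x = Ioc 0 x := Ioc_union_Ioc_eq_Ioc hm0.le hmx
    have Iall : IntegrableOn (fun t : ℝ => (↑(t ^ b₀) : ℂ) * K t y) (Ioc 0 x) := by
      rw [← hunion]; exact I1.union I2
    refine ⟨Iall.mono_set Ioo_subset_Ioc_self, ?_, ?_⟩
    · -- x*y ≤ 1 : single piece on Ioc 0 x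
      intro hxy
      obtain ⟨_, E⟩ := piece b₀ K hK hy hC₀.le measurableSet_Ioc
        (fun t ht => ht.1)
        (fun t ht => hK1 t ht.1 y hy (by
          have : t ≤ x := ht.2
          nlinarith))
        (intOn_Ioc_rpow_zero (b := x) (by linarith) hx.le)
      rw [← integral_Ioc_eq_integral_Ioo]
      refine E.trans ?_
      rw [int_Ioc_rpow_zero (by linarith) hx.le]
      have hyp : 0 < y ^ c₁ := Real.rpow_pos_of_pos hy c₁
      have hxp : 0 < x ^ (b₀ + b₁ + 1) := Real.rpow_pos_of_pos hx _
      calc C₀ * y ^ c₁ * (x ^ (b₀ + b₁ + 1) / (b₀ + b₁ + 1))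
          = (C₀ / (b₀ + b₁ + 1)) * (y ^ c₁ * x ^ (b₀ + b₁ + 1)) := by ring
        _ ≤ C * (y ^ c₁ * x ^ (b₀ + b₁ + 1)) :=
            mul_le_mul_of_nonneg_right hC1 (by positivity)
        _ = C * y ^ c₁ * x ^ (b₀ + b₁ + 1) := by ring
    · -- 1 < x*y : split
      intro hxy
      have hyx : 1 / y < x := (div_lt_iff₀ hy).mpr hxy
      have hmeq : m = 1 / y := by rw [hmdef]; exact min_eq_right hyx.le
      rw [← integral_Ioc_eq_integral_Ioo, ← hunion,
        setIntegral_union (Ioc_disjoint_Ioc_of_le le_rfl) measurableSet_Ioc I1 I2]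
      have hP : 0 < y ^ (c₁ - b₀ - b₁ - 1) := Real.rpow_pos_of_pos hy _
      have hQ : 0 < y ^ c₂ * x ^ (b₀ + b₂ + 1) := by
        have := Real.rpow_pos_of_pos hy c₂
        have := Real.rpow_pos_of_pos hx (b₀ + b₂ + 1)
        positivity
      have hR : 0 < y ^ (c₂ - b₀ - b₂ - 1) := Real.rpow_pos_of_pos hy _
      -- bound piece 1
      have hE1 : ‖∫ t in Ioc (0:ℝ) m, (↑(t ^ b₀) : ℂ) * K t y‖ ≤
          C * y ^ (c₁ - b₀ - b₁ - 1) := by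
        refine E1.trans ?_
        rw [int_Ioc_rpow_zero (by linarith) hm0.le, hmeq]
        have key : y ^ c₁ * (1 / y) ^ (b₀ + b₁ + 1) = y ^ (c₁ - b₀ - b₁ - 1) := by
          rw [rpow_div_eq hy]; ring_nf
        calc C₀ * y ^ c₁ * ((1 / y) ^ (b₀ + b₁ + 1) / (b₀ + b₁ + 1))
            = (C₀ / (b₀ + b₁ + 1)) * (y ^ c₁ * (1 / y) ^ (b₀ + b₁ + 1)) := by ring
          _ = (C₀ / (b₀ + b₁ + 1)) * y ^ (c₁ - b₀ - b₁ - 1) := by rw [key]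
          _ ≤ C * y ^ (c₁ - b₀ - b₁ - 1) := mul_le_mul_of_nonneg_right hC1 hP.le
      -- bound piece 2
      have hE2 : ‖∫ t in Ioc m x, (↑(t ^ b₀) : ℂ) * K t y‖ ≤
          C * (y ^ c₂ * x ^ (b₀ + b₂ + 1)) + C * y ^ (c₂ - b₀ - b₂ - 1) := by
        refine E2.trans ?_
        rw [int_Ioc_rpow_pos hm0 hmx (fun h => hB (by linarith))]
        have hmP : 0 < m ^ (b₀ + b₂ + 1) := Real.rpow_pos_of_pos hm0 _
        have hxP : 0 < x ^ (b₀ + b₂ + 1) := Real.rpow_pos_of_pos hx _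
        have hyc : 0 < y ^ c₂ := Real.rpow_pos_of_pos hy c₂
        have keym : y ^ c₂ * m ^ (b₀ + b₂ + 1) = y ^ (c₂ - b₀ - b₂ - 1) := by
          rw [hmeq, rpow_div_eq hy]; ring_nf
        rcases hB1.lt_or_gt with hneg | hpos
        · have habs' : |b₀ + b₂ + 1| = -(b₀ + b₂ + 1) := abs_of_neg hneg
          have hD : (0:ℝ) < -(b₀ + b₂ + 1) := by linarith
          have hdiv : (x ^ (b₀ + b₂ + 1) - m ^ (b₀ + b₂ + 1)) / (b₀ + b₂ + 1) ≤
              m ^ (b₀ + b₂ + 1) / (-(b₀ + b₂ + 1)) := by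
            have heq : (x ^ (b₀ + b₂ + 1) - m ^ (b₀ + b₂ + 1)) / (b₀ + b₂ + 1) =
                (m ^ (b₀ + b₂ + 1) - x ^ (b₀ + b₂ + 1)) / (-(b₀ + b₂ + 1)) := by
              rw [div_neg, ← neg_div, neg_sub]
            rw [heq]
            gcongr <;> linarith
          have hstep : C₀ * y ^ c₂ * ((x ^ (b₀ + b₂ + 1) - m ^ (b₀ + b₂ + 1)) / (b₀ + b₂ + 1)) ≤
              (C₀ / |b₀ + b₂ + 1|) * (y ^ c₂ * m ^ (b₀ + b₂ + 1)) := by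
            calc C₀ * y ^ c₂ * ((x ^ (b₀ + b₂ + 1) - m ^ (b₀ + b₂ + 1)) / (b₀ + b₂ + 1))
                ≤ C₀ * y ^ c₂ * (m ^ (b₀ + b₂ + 1) / (-(b₀ + b₂ + 1))) :=
                  mul_le_mul_of_nonneg_left hdiv (by positivity)
              _ = (C₀ / |b₀ + b₂ + 1|) * (y ^ c₂ * m ^ (b₀ + b₂ + 1)) := by
                  rw [habs']; ring
          refine hstep.trans ?_
          rw [keym]
          have h1 : (C₀ / |b₀ + b₂ + 1|) * y ^ (c₂ - b₀ - b₂ - 1) ≤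
              C * y ^ (c₂ - b₀ - b₂ - 1) := mul_le_mul_of_nonneg_right hC2 hR.le
          linarith [mul_pos hC hQ]
        · have habs' : |b₀ + b₂ + 1| = b₀ + b₂ + 1 := abs_of_pos hpos
          have hdiv : (x ^ (b₀ + b₂ + 1) - m ^ (b₀ + b₂ + 1)) / (b₀ + b₂ + 1) ≤
              x ^ (b₀ + b₂ + 1) / (b₀ + b₂ + 1) := by
            gcongr <;> linarith
          have hstep : C₀ * y ^ c₂ * ((x ^ (b₀ + b₂ + 1) - m ^ (b₀ + b₂ + 1)) / (b₀ + b₂ + 1)) ≤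
              (C₀ / |b₀ + b₂ + 1|) * (y ^ c₂ * x ^ (b₀ + b₂ + 1)) := by
            calc C₀ * y ^ c₂ * ((x ^ (b₀ + b₂ + 1) - m ^ (b₀ + b₂ + 1)) / (b₀ + b₂ + 1))
                ≤ C₀ * y ^ c₂ * (x ^ (b₀ + b₂ + 1) / (b₀ + b₂ + 1)) :=
                  mul_le_mul_of_nonneg_left hdiv (by positivity)
              _ = (C₀ / |b₀ + b₂ + 1|) * (y ^ c₂ * x ^ (b₀ + b₂ + 1)) := by
                  rw [habs']; ring
          refine hstep.trans ?_
          have h1 : (C₀ / |b₀ + b₂ + 1|) * (y ^ c₂ * x ^ (b₀ + b₂ + 1)) ≤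
              C * (y ^ c₂ * x ^ (b₀ + b₂ + 1)) := mul_le_mul_of_nonneg_right hC2 hQ.le
          linarith [mul_pos hC hR]
      calc ‖(∫ t in Ioc (0:ℝ) m, (↑(t ^ b₀) : ℂ) * K t y) +
              ∫ t in Ioc m x, (↑(t ^ b₀) : ℂ) * K t y‖
          ≤ ‖∫ t in Ioc (0:ℝ) m, (↑(t ^ b₀) : ℂ) * K t y‖ +
              ‖∫ t in Ioc m x, (↑(t ^ b₀) : ℂ) * K t y‖ := norm_add_le _ _
        _ ≤ C * (y ^ c₂ * x ^ (b₀ + b₂ + 1) + y ^ (c₁ - b₀ - b₁ - 1) +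
              y ^ (c₂ - b₀ - b₂ - 1)) := by
            have hexp : C * (y ^ c₂ * x ^ (b₀ + b₂ + 1) + y ^ (c₁ - b₀ - b₁ - 1) +
                y ^ (c₂ - b₀ - b₂ - 1)) = C * (y ^ c₂ * x ^ (b₀ + b₂ + 1)) +
                C * y ^ (c₁ - b₀ - b₁ - 1) + C * y ^ (c₂ - b₀ - b₂ - 1) := by ring
            linarith
  · -- Case (ii)
    rintro ⟨hB, hA⟩
    have hB1 : b₀ + b₂ + 1 < 0 := by linarith
    have hA1 : b₀ + b₁ + 1 ≠ 0 := fun h => hA (by linarith)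
    have habs : 0 < |b₀ + b₁ + 1| := abs_pos.mpr hA1
    have hD : (0:ℝ) < -(b₀ + b₂ + 1) := by linarith
    obtain ⟨C, hCdef⟩ : ∃ C : ℝ, C = C₀ / |b₀ + b₁ + 1| + 2 * (C₀ / (-(b₀ + b₂ + 1))) + 1 :=
      ⟨_, rfl⟩
    have hC : 0 < C := by rw [hCdef]; positivity
    have hC1 : C₀ / |b₀ + b₁ + 1| ≤ C := by
      rw [hCdef]
      have : 0 ≤ 2 * (C₀ / (-(b₀ + b₂ + 1))) := by positivity
      linarith
    have hC2 : C₀ / (-(b₀ + b₂ + 1)) ≤ C := by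
      rw [hCdef]
      have h1 : 0 ≤ C₀ / |b₀ + b₁ + 1| := by positivity
      have h2 : 0 ≤ C₀ / (-(b₀ + b₂ + 1)) := by positivity
      linarith
    refine ⟨C, hC, ?_⟩
    intro x hx y hy
    have hy1 : (0:ℝ) < 1 / y := by positivity
    obtain ⟨m, hmdef⟩ : ∃ m : ℝ, m = max x (1 / y) := ⟨_, rfl⟩
    have hxm : x ≤ m := by rw [hmdef]; exact le_max_left _ _
    have hym : 1 / y ≤ m := by rw [hmdef]; exact le_max_right _ _
    have hm0 : 0 < m := lt_of_lt_of_le hx hxm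
    -- piece 1 : on Ioc x m
    obtain ⟨I1, E1⟩ := piece (b := b₁) (c := c₁) (s := Ioc x m) b₀ K hK hy hC₀.le measurableSet_Ioc
      (fun t ht => hx.trans ht.1)
      (fun t ht => by
        refine hK1 t (hx.trans ht.1) y hy ?_
        rcases le_or_gt (1 / y) x with h | h
        · exfalso
          have hmx2 : m = x := by rw [hmdef]; exact max_eq_left h
          have := ht.1; have := ht.2
          linarith
        · have hmeq : m = 1 / y := by rw [hmdef]; exact max_eq_right h.le
          exact (le_div_iff₀ hy).mp (hmeq ▸ ht.2))
      (intOn_Ioc_rpow_pos hx)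
    -- piece 2 : on Ioi m
    obtain ⟨I2, E2⟩ := piece (b := b₂) (c := c₂) b₀ K hK hy hC₀.le measurableSet_Ioi
      (fun t ht => hm0.trans ht)
      (fun t ht => hK2 t (hm0.trans ht) y hy ((div_lt_iff₀ hy).mp (lt_of_le_of_lt hym ht)))
      (integrableOn_Ioi_rpow_of_lt (by linarith) hm0)
    have hunion : Ioc x m ∪ Ioi m = Ioi x := Ioc_union_Ioi_eq_Ioi hxm
    have Iall : IntegrableOn (fun t : ℝ => (↑(t ^ b₀) : ℂ) * K t y) (Ioi x) := by
      rw [← hunion]; exact I1.union I2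
    refine ⟨Iall, ?_, ?_⟩
    · -- x*y ≤ 1 : split
      intro hxy
      have hx1y : x ≤ 1 / y := (le_div_iff₀ hy).mpr hxy
      have hmeq : m = 1 / y := by rw [hmdef]; exact max_eq_right hx1y
      rw [← hunion, setIntegral_union Ioc_disjoint_Ioi_same measurableSet_Ioi I1 I2]
      have hP : 0 < y ^ (c₁ - b₀ - b₁ - 1) := Real.rpow_pos_of_pos hy _
      have hQ : 0 < y ^ c₁ * x ^ (b₀ + b₁ + 1) := by
        have := Real.rpow_pos_of_pos hy c₁
        have := Real.rpow_pos_of_pos hx (b₀ + b₁ + 1)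
        positivity
      have hR : 0 < y ^ (c₂ - b₀ - b₂ - 1) := Real.rpow_pos_of_pos hy _
      -- bound piece 2
      have hE2 : ‖∫ t in Ioi m, (↑(t ^ b₀) : ℂ) * K t y‖ ≤
          C * y ^ (c₂ - b₀ - b₂ - 1) := by
        refine E2.trans ?_
        rw [integral_Ioi_rpow_of_lt (by linarith) hm0]
        have keym : y ^ c₂ * m ^ (b₀ + b₂ + 1) = y ^ (c₂ - b₀ - b₂ - 1) := by
          rw [hmeq, rpow_div_eq hy]; ring_nf
        calc C₀ * y ^ c₂ * (-m ^ (b₀ + b₂ + 1) / (b₀ + b₂ + 1))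
            = (C₀ / (-(b₀ + b₂ + 1))) * (y ^ c₂ * m ^ (b₀ + b₂ + 1)) := by
              rw [div_neg, neg_div]; ring
          _ = (C₀ / (-(b₀ + b₂ + 1))) * y ^ (c₂ - b₀ - b₂ - 1) := by rw [keym]
          _ ≤ C * y ^ (c₂ - b₀ - b₂ - 1) := mul_le_mul_of_nonneg_right hC2 hR.le
      -- bound piece 1
      have hE1 : ‖∫ t in Ioc x m, (↑(t ^ b₀) : ℂ) * K t y‖ ≤
          C * (y ^ c₁ * x ^ (b₀ + b₁ + 1)) + C * y ^ (c₁ - b₀ - b₁ - 1) := by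
        refine E1.trans ?_
        rw [int_Ioc_rpow_pos hx hxm (fun h => hA (by linarith))]
        have hmP : 0 < m ^ (b₀ + b₁ + 1) := Real.rpow_pos_of_pos hm0 _
        have hxP : 0 < x ^ (b₀ + b₁ + 1) := Real.rpow_pos_of_pos hx _
        have hyc : 0 < y ^ c₁ := Real.rpow_pos_of_pos hy c₁
        have keym : y ^ c₁ * m ^ (b₀ + b₁ + 1) = y ^ (c₁ - b₀ - b₁ - 1) := by
          rw [hmeq, rpow_div_eq hy]; ring_nf
        rcases hA1.lt_or_gt with hneg | hpos
        · have habs' : |b₀ + b₁ + 1| = -(b₀ + b₁ + 1) := abs_of_neg hneg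
          have hdiv : (m ^ (b₀ + b₁ + 1) - x ^ (b₀ + b₁ + 1)) / (b₀ + b₁ + 1) ≤
              x ^ (b₀ + b₁ + 1) / (-(b₀ + b₁ + 1)) := by
            have heq : (m ^ (b₀ + b₁ + 1) - x ^ (b₀ + b₁ + 1)) / (b₀ + b₁ + 1) =
                (x ^ (b₀ + b₁ + 1) - m ^ (b₀ + b₁ + 1)) / (-(b₀ + b₁ + 1)) := by
              rw [div_neg, ← neg_div, neg_sub]
            rw [heq]
            gcongr <;> linarith
          have hstep : C₀ * y ^ c₁ * ((m ^ (b₀ + b₁ + 1) - x ^ (b₀ + b₁ + 1)) / (b₀ + b₁ + 1)) ≤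
              (C₀ / |b₀ + b₁ + 1|) * (y ^ c₁ * x ^ (b₀ + b₁ + 1)) := by
            calc C₀ * y ^ c₁ * ((m ^ (b₀ + b₁ + 1) - x ^ (b₀ + b₁ + 1)) / (b₀ + b₁ + 1))
                ≤ C₀ * y ^ c₁ * (x ^ (b₀ + b₁ + 1) / (-(b₀ + b₁ + 1))) :=
                  mul_le_mul_of_nonneg_left hdiv (by positivity)
              _ = (C₀ / |b₀ + b₁ + 1|) * (y ^ c₁ * x ^ (b₀ + b₁ + 1)) := by
                  rw [habs']; ring
          refine hstep.trans ?_
          have h1 : (C₀ / |b₀ + b₁ + 1|) * (y ^ c₁ * x ^ (b₀ + b₁ + 1)) ≤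
              C * (y ^ c₁ * x ^ (b₀ + b₁ + 1)) := mul_le_mul_of_nonneg_right hC1 hQ.le
          linarith [mul_pos hC hP]
        · have habs' : |b₀ + b₁ + 1| = b₀ + b₁ + 1 := abs_of_pos hpos
          have hdiv : (m ^ (b₀ + b₁ + 1) - x ^ (b₀ + b₁ + 1)) / (b₀ + b₁ + 1) ≤
              m ^ (b₀ + b₁ + 1) / (b₀ + b₁ + 1) := by
            gcongr <;> linarith
          have hstep : C₀ * y ^ c₁ * ((m ^ (b₀ + b₁ + 1) - x ^ (b₀ + b₁ + 1)) / (b₀ + b₁ + 1)) ≤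
              (C₀ / |b₀ + b₁ + 1|) * (y ^ c₁ * m ^ (b₀ + b₁ + 1)) := by
            calc C₀ * y ^ c₁ * ((m ^ (b₀ + b₁ + 1) - x ^ (b₀ + b₁ + 1)) / (b₀ + b₁ + 1))
                ≤ C₀ * y ^ c₁ * (m ^ (b₀ + b₁ + 1) / (b₀ + b₁ + 1)) :=
                  mul_le_mul_of_nonneg_left hdiv (by positivity)
              _ = (C₀ / |b₀ + b₁ + 1|) * (y ^ c₁ * m ^ (b₀ + b₁ + 1)) := by
                  rw [habs']; ring
          refine hstep.trans ?_
          rw [keym]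
          have h1 : (C₀ / |b₀ + b₁ + 1|) * y ^ (c₁ - b₀ - b₁ - 1) ≤
              C * y ^ (c₁ - b₀ - b₁ - 1) := mul_le_mul_of_nonneg_right hC1 hP.le
          linarith [mul_pos hC hQ]
      calc ‖(∫ t in Ioc x m, (↑(t ^ b₀) : ℂ) * K t y) +
              ∫ t in Ioi m, (↑(t ^ b₀) : ℂ) * K t y‖
          ≤ ‖∫ t in Ioc x m, (↑(t ^ b₀) : ℂ) * K t y‖ +
              ‖∫ t in Ioi m, (↑(t ^ b₀) : ℂ) * K t y‖ := norm_add_le _ _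
        _ ≤ C * (y ^ c₁ * x ^ (b₀ + b₁ + 1) + y ^ (c₁ - b₀ - b₁ - 1) +
              y ^ (c₂ - b₀ - b₂ - 1)) := by
            have hexp : C * (y ^ c₁ * x ^ (b₀ + b₁ + 1) + y ^ (c₁ - b₀ - b₁ - 1) +
                y ^ (c₂ - b₀ - b₂ - 1)) = C * (y ^ c₁ * x ^ (b₀ + b₁ + 1)) +
                C * y ^ (c₁ - b₀ - b₁ - 1) + C * y ^ (c₂ - b₀ - b₂ - 1) := by ring
            linarith
    · -- 1 < x*y : single piece on Ioi x
      intro hxy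
      have hyx : 1 / y < x := (div_lt_iff₀ hy).mpr hxy
      obtain ⟨_, E⟩ := piece (b := b₂) (c := c₂) b₀ K hK hy hC₀.le measurableSet_Ioi
        (fun t ht => hx.trans ht)
        (fun t ht => hK2 t (hx.trans ht) y hy ((div_lt_iff₀ hy).mp (hyx.trans ht)))
        (integrableOn_Ioi_rpow_of_lt (by linarith) hx)
      refine E.trans ?_
      rw [integral_Ioi_rpow_of_lt (by linarith) hx]
      have hyp : 0 < y ^ c₂ := Real.rpow_pos_of_pos hy c₂
      have hxp : 0 < x ^ (b₀ + b₂ + 1) := Real.rpow_pos_of_pos hx _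
      calc C₀ * y ^ c₂ * (-x ^ (b₀ + b₂ + 1) / (b₀ + b₂ + 1))
          = (C₀ / (-(b₀ + b₂ + 1))) * (y ^ c₂ * x ^ (b₀ + b₂ + 1)) := by
            rw [div_neg, neg_div]; ring
        _ ≤ C * (y ^ c₂ * x ^ (b₀ + b₂ + 1)) :=
            mul_le_mul_of_nonneg_right hC2 (by positivity)
        _ = C * y ^ c₂ * x ^ (b₀ + b₂ + 1) := by ring
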